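/- Finite-word characterization of variation: let M be an input-complete IGMM and q, q' ∈ Q. For a finite sequence i_0, …, i_k of input valuations, let q_0 = q, q_{j+1} = δ(q_j, i_j) and q'_0 = q', q'_{j+1} = δ(q'_j, i_j). Then q ≈ q' if and only if for every k ≥ 0 and every sequence i_0, …, i_k ∈ 𝔹^I, λ(q_k, i_k) ∩ λ(q'_k, i_k) ≠ ∅. -/
import Mathlib


/-- An incompletely specified generalized Mealy machine (IGMM) over input
propositions `I`, output propositions `O`, with state set `Q`.
Input valuations are `I → Bool`, output valuations are `O → Bool`.
`delta` is the partial transition function, `lam` the output function. -/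
structure IGMM (I O Q : Type*) where
  init : Q
  delta : Q → (I → Bool) → Option Q
  lam : Q → (I → Bool) → Set (O → Bool)
  lam_nonempty : ∀ q i, (lam q i).Nonempty
  lam_top : ∀ q i, delta q i = none → lam q i = Set.univ

namespace IGMM

/-- `(ι, o) ⊨ M_q` : either an infinite run, or a finite run ending where `delta`
is undefined. -/
def Sat {I O Q : Type*} (M : IGMM I O Q) (q : Q) (ι : ℕ → I → Bool)
    (o : ℕ → O → Bool) : Prop :=
  (∃ qs : ℕ → Q, qs 0 = q ∧
      ∀ j : ℕ, M.delta (qs j) (ι j) = some (qs (j + 1)) ∧ o j ∈ M.lam (qs j) (ι j)) ∨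
  (∃ (k : ℕ) (qs : ℕ → Q), qs 0 = q ∧
      (∀ j < k, M.delta (qs j) (ι j) = some (qs (j + 1)) ∧ o j ∈ M.lam (qs j) (ι j)) ∧
      M.delta (qs k) (ι k) = none)

/-- The behaviour set `Beh_M(q, ι) = {o | (ι, o) ⊨ M_q}`. -/
def Beh {I O Q : Type*} (M : IGMM I O Q) (q : Q) (ι : ℕ → I → Bool) :
    Set (ℕ → O → Bool) :=
  {o | M.Sat q ι o}

end IGMM

/-- `q' ⊑ q` : the state `q'` of `M'` is a specialization of the state `q` of `M`. -/
def IGMM.Specializes {I O Q' Q : Type*} (M' : IGMM I O Q') (q' : Q')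
    (M : IGMM I O Q) (q : Q) : Prop :=
  ∀ ι : ℕ → I → Bool, M'.Beh q' ι ⊆ M.Beh q ι

/-- `q' ≈ q` : the state `q'` of `M'` is a variation of the state `q` of `M`. -/
def IGMM.IsVariation {I O Q' Q : Type*} (M' : IGMM I O Q') (q' : Q')
    (M : IGMM I O Q) (q : Q) : Prop :=
  ∀ ι : ℕ → I → Bool, (M'.Beh q' ι ∩ M.Beh q ι).Nonempty

/-- Iterated transition: `runFrom d ι q k` is the state `q_k` with `q_0 = q`
and `q_{j+1} = d(q_j, ι_j)`. -/
def runFrom {I Q : Type*} (d : Q → (I → Bool) → Q) (ι : ℕ → I → Bool) (q : Q) :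
    ℕ → Q
  | 0 => q
  | k + 1 => d (runFrom d ι q k) (ι k)

/-- finite-word characterization of variation for input-complete
machines (input-completeness is witnessed by the total function `d` underlying
`δ`): `q ≈ q'` iff along every input sequence the outputs of the two runs
intersect at every step. -/
theorem variation_iff_finite_words {I O Q : Type*}
    [Fintype I] [Fintype O] [Fintype Q]
    (M : IGMM I O Q) (d : Q → (I → Bool) → Q)
    (hd : ∀ (q : Q) (i : I → Bool), M.delta q i = some (d q i))
    (q q' : Q) :
    IGMM.IsVariation M q M q' ↔
      ∀ (ι : ℕ → I → Bool) (k : ℕ),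
        (M.lam (runFrom d ι q k) (ι k) ∩ M.lam (runFrom d ι q' k) (ι k)).Nonempty := by
  constructor
  · intro h ι k
    obtain ⟨o, ho1, ho2⟩ := h ι
    have key : ∀ (p : Q), o ∈ M.Beh p ι → ∀ j, o j ∈ M.lam (runFrom d ι p j) (ι j) := by
      intro p hp j
      rcases hp with ⟨qs, hq0, hqs⟩ | ⟨m, qs, hq0, hrun, hnone⟩
      · have heq : ∀ n, qs n = runFrom d ι p n := by
          intro n
          induction n with
          | zero => exact hq0
          | succ n ih =>
            have h1 := (hqs n).1
            rw [hd (qs n) (ι n)] at h1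
            have h2 : qs (n + 1) = d (qs n) (ι n) := (Option.some_injective _ h1).symm
            rw [h2, ih]
            rfl
        have := (hqs j).2
        rwa [heq j] at this
      · rw [hd] at hnone
        exact absurd hnone (by simp)
    exact ⟨o k, key q ho1 k, key q' ho2 k⟩
  · intro h ι
    choose o ho1 ho2 using h ι
    exact ⟨o, Or.inl ⟨runFrom d ι q, rfl, fun j => ⟨hd _ _, ho1 j⟩⟩,
      Or.inl ⟨runFrom d ι q', rfl, fun j => ⟨hd _ _, ho2 j⟩⟩⟩
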